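/- Let γ ≥ 1 and set C' = 14γ/3. There exists an absolute constant θ' ∈ (0,1) (any θ' with (1−θ')²/(2θ'+1) ≥ 4/7 works) such that: whenever n F ≤ θ' C' ln n and (1−θ') ln n ≥ 3/7, one has P( N − nF ≥ (1−θ') C' ln n ) ≤ F n^{−γ}, where N = ∑_{i=1}^n 1_{X_i ∈ A} and F = P(X_1 ∈ A). -/

import Mathlib

open MeasureTheory ProbabilityTheory Filter
open scoped ENNReal NNReal BigOperators

noncomputable section

/-- Sup norm `‖g‖_∞ = sup_x |g x|` of a (bounded) function. -/
def supNorm (g : ℝ → ℝ) : ℝ := ⨆ x : ℝ, |g x|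

/-- The Haar wavelets on `ℝ`: `ψ_{-1,k} = 1_{[k,k+1)}` and, for `j ≥ 0`,
`ψ_{jk} = 2^{j/2} (1_{[k2^{-j},(k+1/2)2^{-j})} - 1_{[(k+1/2)2^{-j},(k+1)2^{-j})})`. -/
def haar (j k : ℤ) (x : ℝ) : ℝ :=
  if j = -1 then (Set.Ico (k : ℝ) ((k : ℝ) + 1)).indicator (fun _ => (1 : ℝ)) x
  else (2 : ℝ) ^ ((j : ℝ) / 2) *
    ((Set.Ico ((k : ℝ) * (2 : ℝ) ^ (-j)) (((k : ℝ) + 1 / 2) * (2 : ℝ) ^ (-j))).indicator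
        (fun _ => (1 : ℝ)) x
      - (Set.Ico (((k : ℝ) + 1 / 2) * (2 : ℝ) ^ (-j)) (((k : ℝ) + 1) * (2 : ℝ) ^ (-j))).indicator
        (fun _ => (1 : ℝ)) x)

/-- `‖ψ_{jk}‖_∞`, i.e. `1` if `j = -1` and `2^{j/2}` otherwise. -/
def haarSupNorm (j : ℤ) : ℝ := if j = -1 then 1 else (2 : ℝ) ^ ((j : ℝ) / 2)

/-- The Haar wavelet coefficient `β_{jk} = ∫ ψ_{jk} f`. -/
def haarCoef (f : ℝ → ℝ) (j k : ℤ) : ℝ := ∫ x : ℝ, haar j k x * f x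

/-- `σ_{jk}² = ∫ ψ_{jk}² f − β_{jk}²`. -/
def haarVar (f : ℝ → ℝ) (j k : ℤ) : ℝ := (∫ x : ℝ, (haar j k x) ^ 2 * f x) - (haarCoef f j k) ^ 2

/-- Empirical coefficient `n⁻¹ ∑ᵢ g(Yᵢ)` for data `Y`. -/
def empCoefG {n : ℕ} (g : ℝ → ℝ) (Y : Fin n → ℝ) : ℝ := (n : ℝ)⁻¹ * ∑ i, g (Y i)

/-- Empirical variance estimator
`σ̂² = (n(n−1))⁻¹ ∑_{i} ∑_{l<i} (g(Yᵢ) − g(Y_l))²`. -/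
def empVarG {n : ℕ} (g : ℝ → ℝ) (Y : Fin n → ℝ) : ℝ :=
  ((n : ℝ) * ((n : ℝ) - 1))⁻¹ *
    ∑ i : Fin n, ∑ l ∈ Finset.univ.filter (fun l => l < i), (g (Y i) - g (Y l)) ^ 2

/-- `σ̃² = σ̂² + 2M√(2γσ̂² (ln n)/n) + 8γM² (ln n)/n`, `M` playing the role of `‖g‖_∞`. -/
def tildeVarG {n : ℕ} (γ M : ℝ) (g : ℝ → ℝ) (Y : Fin n → ℝ) : ℝ :=
  empVarG g Y + 2 * M * Real.sqrt (2 * γ * empVarG g Y * Real.log n / n)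
    + 8 * γ * M ^ 2 * Real.log n / n

/-- The threshold `η = √(2γσ̃² (ln n)/n) + 2Mγ(ln n)/(3n)`. -/
def threshG {n : ℕ} (γ M : ℝ) (g : ℝ → ℝ) (Y : Fin n → ℝ) : ℝ :=
  Real.sqrt (2 * γ * tildeVarG γ M g Y * Real.log n / n) + 2 * M * γ * Real.log n / (3 * n)

/-- `β̂_{jk}` computed from data `Y`. -/
def empCoef {n : ℕ} (j k : ℤ) (Y : Fin n → ℝ) : ℝ := empCoefG (haar j k) Y

/-- `σ̂_{jk}²` computed from data `Y`. -/
def empVar {n : ℕ} (j k : ℤ) (Y : Fin n → ℝ) : ℝ := empVarG (haar j k) Y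

/-- `σ̃_{jk}²` computed from data `Y`. -/
def tildeVar {n : ℕ} (γ : ℝ) (j k : ℤ) (Y : Fin n → ℝ) : ℝ :=
  tildeVarG γ (haarSupNorm j) (haar j k) Y

/-- The threshold `η_{jk,γ}` computed from data `Y`. -/
def thresh {n : ℕ} (γ : ℝ) (j k : ℤ) (Y : Fin n → ℝ) : ℝ :=
  threshG γ (haarSupNorm j) (haar j k) Y

/-- `j₀ = ⌊log₂(n^c (ln n)^{c'})⌋`. -/
def jmax (n : ℕ) (c c' : ℝ) : ℤ := ⌊Real.logb 2 ((n : ℝ) ^ c * (Real.log n) ^ c')⌋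

/-- The Haar thresholding estimator
`f̃_{n,γ} = ∑_{(j,k) ∈ Γ_n} β̂_{jk} 1_{|β̂_{jk}| ≥ η_{jk,γ}} ψ_{jk}` built from data `Y`. -/
def haarEstimator {n : ℕ} (γ c c' : ℝ) (Y : Fin n → ℝ) (x : ℝ) : ℝ :=
  ∑ j ∈ Finset.Icc (-1 : ℤ) (jmax n c c'),
    ∑' k : ℤ, (if thresh γ j k Y ≤ |empCoef j k Y| then empCoef j k Y else 0) * haar j k x

/-- `f` is a probability density on `ℝ`. -/
def IsDensity (f : ℝ → ℝ) : Prop :=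
  Measurable f ∧ (∀ x, 0 ≤ f x) ∧ (∫ x : ℝ, f x) = 1

/-- `X₁, …, X_n` are i.i.d. random variables with density `f` (w.r.t. Lebesgue measure). -/
def IsIIDSample {Ω : Type*} [MeasurableSpace Ω] (P : Measure Ω) {n : ℕ}
    (X : Fin n → Ω → ℝ) (f : ℝ → ℝ) : Prop :=
  (∀ i, Measurable (X i)) ∧
  iIndepFun X P ∧
  (∀ i, Measure.map (X i) P = volume.withDensity (fun x => ENNReal.ofReal (f x)))

/-- `X₁, …, X_n` are i.i.d. real random variables. -/
def IsIID {Ω : Type*} [MeasurableSpace Ω] (P : Measure Ω) {n : ℕ} (X : Fin n → Ω → ℝ) : Prop :=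
  (∀ i, Measurable (X i)) ∧
  iIndepFun X P ∧
  (∀ i i', Measure.map (X i) P = Measure.map (X i') P)

/-- The `ℓ^p` norm of a `ℤ`-indexed sequence, `p ∈ [1,∞]`. -/
def lpSeqNorm (p : ℝ≥0∞) (a : ℤ → ℝ) : ℝ≥0∞ :=
  if p = ∞ then ⨆ k : ℤ, (‖a k‖₊ : ℝ≥0∞)
  else (∑' k : ℤ, (‖a k‖₊ : ℝ≥0∞) ^ p.toReal) ^ (1 / p.toReal)

/-- The Besov norm `‖f‖_{α,p,q}` computed from the Haar coefficients of `f`. -/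
def besovNorm (α : ℝ) (p q : ℝ≥0∞) (f : ℝ → ℝ) : ℝ≥0∞ :=
  lpSeqNorm p (fun k => haarCoef f (-1) k) +
  (if q = ∞ then
      ⨆ j : ℕ, ((2 : ℝ≥0∞) ^ ((j : ℝ) * (α + 1 / 2 - 1 / p.toReal)) *
        lpSeqNorm p (fun k => haarCoef f (j : ℤ) k))
    else
      (∑' j : ℕ, ((2 : ℝ≥0∞) ^ ((j : ℝ) * (α + 1 / 2 - 1 / p.toReal)) *
        lpSeqNorm p (fun k => haarCoef f (j : ℤ) k)) ^ q.toReal) ^ (1 / q.toReal))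

/-!
On the event, `N ≥ m := ⌈(1 - θ') C' ln n⌉`, so a union bound over the `m`-subsets of the sample
gives the probability at most `C(n, m) F^m ≤ (nF)^m / m! ≤ nF (θ' C' ln n)^(m-1) / m!`.
The condition on `θ'` forces `θ' ≤ 1/7`, hence `m ≥ 6 θ' C' ln n` and `m ≥ 4γ ln n`, and the
crude Stirling bound `m! ≥ (m/e)^m` together with `e^(3/2) ≤ 6` gives
`(θ' C' ln n)^(m-1) n^(2γ) ≤ m!`. So the probability is at most `F n^(1-2γ) ≤ F n^(-γ)`.
-/

open Real
open scoped Nat Finset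

lemma exp_three_halves_le_six : exp (3 / 2) ≤ 6 := by
  have hsq : exp (3 / 2) ^ 2 = exp 1 ^ 3 := by
    rw [← exp_nat_mul, ← exp_nat_mul]; norm_num
  have hcube : exp 1 ^ 3 ≤ 3 ^ 3 := by gcongr; exact exp_one_lt_three.le
  nlinarith [exp_pos (3 / 2)]

lemma exp_half_le_two : exp (1 / 2) ≤ 2 := by
  have hsq : exp (1 / 2) ^ 2 = exp 1 := by
    rw [← exp_nat_mul]; norm_num
  nlinarith [exp_one_lt_three, exp_pos (1 / 2)]

lemma exp_div_two_le_factorial {m : ℕ} (hm : 3 ≤ m) : exp (m / 2) ≤ m ! := by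
  induction m, hm using Nat.le_induction with
  | base => simpa [Nat.factorial] using exp_three_halves_le_six
  | succ k hk ih =>
    have hk' : (2 : ℝ) ≤ k + 1 := by norm_cast; omega
    calc exp ((k + 1 : ℕ) / 2) = exp (1 / 2) * exp (k / 2) := by
          rw [← exp_add]; push_cast; ring_nf
      _ ≤ (k + 1) * k ! := by
          gcongr
          exact exp_half_le_two.trans hk'
      _ = (k + 1)! := by push_cast [Nat.factorial_succ]; ring

lemma pow_pred_mul_exp_le_factorial {x y : ℝ} {m : ℕ} (hx : 0 ≤ x) (hm : 3 ≤ m)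
    (hxm : 6 * x ≤ m) (hym : 2 * y ≤ m) : x ^ (m - 1) * exp y ≤ m ! := by
  have hy : exp y ≤ exp (m / 2) := exp_le_exp.mpr (by linarith)
  rcases le_or_gt x 1 with hx1 | hx1
  · calc x ^ (m - 1) * exp y ≤ 1 * exp (m / 2) := by
          gcongr; exact pow_le_one₀ hx hx1
      _ ≤ m ! := by simpa using exp_div_two_le_factorial hm
  -- `exp (3/2) ≤ 6` is what makes `(m/6)^m e^{m/2}` fall below the Stirling bound `(m/e)^m`.
  have hbase : x * exp (1 / 2) ≤ m * exp (-1) := by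
    have : exp (1 / 2) ≤ 6 * exp (-1) := by
      rw [show (1 / 2 : ℝ) = 3 / 2 + -1 by norm_num, exp_add]
      gcongr; exact exp_three_halves_le_six
    nlinarith [exp_pos (-1), exp_pos (1 / 2)]
  calc x ^ (m - 1) * exp y ≤ x ^ m * exp (m / 2) := by
        gcongr
        · exact hx1.le
        · omega
    _ = (x * exp (1 / 2)) ^ m := by
        rw [mul_pow, ← exp_nat_mul]; ring_nf
    _ ≤ (m * exp (-1)) ^ m := by gcongr
    _ = (m : ℝ) ^ m / exp m := by
        rw [mul_pow, ← exp_nat_mul, mul_neg_one, exp_neg, div_eq_mul_inv]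
    _ ≤ m ! := by
        have := Real.pow_div_factorial_le_exp _ (Nat.cast_nonneg m) m
        rw [div_le_iff₀ (by positivity)] at this
        rw [div_le_iff₀ (exp_pos _)]
        linarith

lemma choose_mul_pow_le_mul_exp_neg {n m : ℕ} {p b s : ℝ} (hp : 0 ≤ p) (hm : m ≠ 0)
    (hb : n * p ≤ b) (hfac : b ^ (m - 1) * exp s ≤ m !) :
    n.choose m * p ^ m ≤ n * p * exp (-s) := by
  obtain ⟨k, rfl⟩ := Nat.exists_eq_succ_of_ne_zero hm
  have hnp : 0 ≤ n * p := by positivity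
  have hfac' : b ^ k ≤ (k + 1)! * exp (-s) := by
    rw [exp_neg, ← div_eq_mul_inv, le_div_iff₀ (exp_pos s)]; simpa using hfac
  calc n.choose (k + 1) * p ^ (k + 1) ≤ n ^ (k + 1) / (k + 1)! * p ^ (k + 1) := by
        gcongr; exact Nat.choose_le_pow_div _ _
    _ = n * p * (n * p) ^ k / (k + 1)! := by ring
    _ ≤ n * p * b ^ k / (k + 1)! := by gcongr
    _ ≤ n * p * ((k + 1)! * exp (-s)) / (k + 1)! := by gcongr
    _ = n * p * exp (-s) := by field_simp

theorem ProbabilityTheory.iIndepFun.measure_le_card_filter_mem_le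
    {Ω ι β : Type*} [MeasurableSpace Ω] [MeasurableSpace β] [Fintype ι]
    {P : Measure Ω} {X : ι → Ω → β} (hX : iIndepFun X P) {A : Set β} [DecidablePred (· ∈ A)]
    (hA : MeasurableSet A) {q : ℝ≥0∞} (hq : ∀ i, P (X i ⁻¹' A) = q) (m : ℕ) :
    P {ω | m ≤ #{i | X i ω ∈ A}} ≤ (Fintype.card ι).choose m * q ^ m := by
  have hcover : {ω | m ≤ #{i | X i ω ∈ A}} ⊆
      ⋃ S ∈ (Finset.univ.powersetCard m : Finset (Finset ι)), ⋂ i ∈ S, X i ⁻¹' A := by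
    intro ω hω
    obtain ⟨S, hS, hcard⟩ := Finset.exists_subset_card_eq hω
    refine Set.mem_biUnion (Finset.mem_powersetCard.mpr ⟨S.subset_univ, hcard⟩) ?_
    exact Set.mem_iInter₂.mpr fun i hi => (Finset.mem_filter.mp (hS hi)).2
  calc P {ω | m ≤ #{i | X i ω ∈ A}}
      ≤ ∑ S ∈ (Finset.univ.powersetCard m : Finset (Finset ι)), P (⋂ i ∈ S, X i ⁻¹' A) :=
        (measure_mono hcover).trans (measure_biUnion_finset_le _ _)
    _ = ∑ S ∈ (Finset.univ.powersetCard m : Finset (Finset ι)), q ^ m := by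
        refine Finset.sum_congr rfl fun S hS => ?_
        rw [hX.meas_biInter fun i _ => ⟨A, hA, rfl⟩, Finset.prod_congr rfl fun i _ => hq i,
          Finset.prod_const, (Finset.mem_powersetCard.mp hS).2]
    _ = (Fintype.card ι).choose m * q ^ m := by
        rw [Finset.sum_const, Finset.card_powersetCard, Finset.card_univ, nsmul_eq_mul]

lemma IsIID.measureReal_le_card_filter_mem_le {Ω : Type*} [MeasurableSpace Ω]
    {P : Measure Ω} [IsFiniteMeasure P] {n : ℕ} {X : Fin n → Ω → ℝ} (hX : IsIID P X)
    {A : Set ℝ} [DecidablePred (· ∈ A)] (hA : MeasurableSet A) (i₀ : Fin n) (m : ℕ) :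
    P.real {ω | m ≤ #{i | X i ω ∈ A}} ≤ n.choose m * P.real (X i₀ ⁻¹' A) ^ m := by
  obtain ⟨hXmeas, hXindep, hXident⟩ := hX
  have hq : ∀ i, P (X i ⁻¹' A) = P (X i₀ ⁻¹' A) := fun i => by
    rw [← Measure.map_apply (hXmeas i) hA, hXident, Measure.map_apply (hXmeas _) hA]
  have := hXindep.measure_le_card_filter_mem_le hA hq m
  rw [Fintype.card_fin] at this
  simpa [measureReal_def] using ENNReal.toReal_mono (by finiteness) this

lemma le_one_div_seven_of_four_div_seven_le {θ : ℝ} (h0 : 0 < θ) (h1 : θ < 1)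
    (h : 4 / 7 ≤ (1 - θ) ^ 2 / (2 * θ + 1)) : θ ≤ 1 / 7 := by
  -- `4/7 (2θ + 1) ≤ (1 - θ)²` factors as `(7θ - 1)(θ - 3) ≥ 0`.
  rw [le_div_iff₀ (by linarith)] at h
  nlinarith

lemma mul_exp_neg_two_mul_log_le_rpow_neg {x γ : ℝ} (hx : 1 ≤ x) (hγ : 1 ≤ γ) :
    x * exp (-(2 * γ * log x)) ≤ x ^ (-γ) := by
  have hlog : 0 ≤ log x := log_nonneg hx
  rw [rpow_def_of_pos (by linarith), ← exp_log (by linarith : 0 < x), ← exp_add, log_exp]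
  exact exp_le_exp.mpr (by nlinarith)

open scoped Classical
/-- Lemma B.3: with `C' = 14γ/3` and any `θ' ∈ (0,1)` with `(1−θ')²/(2θ'+1) ≥ 4/7`, if
`nF ≤ θ'C' ln n` and `(1−θ') ln n ≥ 3/7` then `P(N − nF ≥ (1−θ')C' ln n) ≤ F n^{−γ}`. -/
theorem statement9 (γ : ℝ) (hγ : 1 ≤ γ) (C' : ℝ) (hC' : C' = 14 * γ / 3)
    (θ' : ℝ) (hθ'0 : 0 < θ') (hθ'1 : θ' < 1)
    (hθ' : 4 / 7 ≤ (1 - θ') ^ 2 / (2 * θ' + 1)) :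
    ∀ n : ℕ, ∀ hn : 2 ≤ n,
    ∀ (Ω : Type) (_ : MeasurableSpace Ω) (P : Measure Ω), IsProbabilityMeasure P →
    ∀ X : Fin n → Ω → ℝ, IsIID P X →
    ∀ A : Set ℝ, MeasurableSet A →
    ∀ F : ℝ, F = (P {ω | X ⟨0, by omega⟩ ω ∈ A}).toReal →
    (n : ℝ) * F ≤ θ' * C' * Real.log n →
    3 / 7 ≤ (1 - θ') * Real.log n →
    (P {ω | (1 - θ') * C' * Real.log n ≤
        (∑ i, if X i ω ∈ A then (1 : ℝ) else 0) - n * F}).toReal ≤ F * (n : ℝ) ^ (-γ) := by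
  intro n hn Ω _ P _ X hX A hA F hF hnF _
  set L := log n
  set m := ⌈(1 - θ') * C' * L⌉₊
  have hL : 0.6931471803 < L :=
    log_two_gt_d9.trans_le (log_le_log two_pos (by exact_mod_cast hn))
  have hθ'7 := le_one_div_seven_of_four_div_seven_le hθ'0 hθ'1 hθ'
  have hmt : (1 - θ') * C' * L ≤ m := Nat.le_ceil _
  have h4γ : 4 * γ * L ≤ m := by subst hC'; nlinarith
  have h6θ' : 6 * (θ' * C' * L) ≤ m := by subst hC'; nlinarith
  have hm3 : 3 ≤ m := by
    have : (2 : ℝ) < m := by nlinarith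
    exact_mod_cast this
  have hF0 : 0 ≤ F := hF ▸ ENNReal.toReal_nonneg
  have hbase : 0 ≤ θ' * C' * L := by subst hC'; positivity
  have hevent : {ω | (1 - θ') * C' * L ≤ (∑ i, if X i ω ∈ A then (1 : ℝ) else 0) - n * F} ⊆
      {ω | m ≤ #{i | X i ω ∈ A}} := fun ω hω => by
    simp only [Set.mem_ofPred_eq, Finset.sum_boole] at hω ⊢
    exact Nat.ceil_le.mpr (by nlinarith)
  calc _ ≤ P.real {ω | m ≤ #{i | X i ω ∈ A}} := measureReal_mono hevent
    _ ≤ n.choose m * F ^ m := hF ▸ hX.measureReal_le_card_filter_mem_le hA _ m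
    _ ≤ n * F * exp (-(2 * γ * L)) := choose_mul_pow_le_mul_exp_neg hF0 (by omega) hnF
        (pow_pred_mul_exp_le_factorial hbase hm3 h6θ' (by linarith))
    _ = F * (n * exp (-(2 * γ * L))) := by ring
    _ ≤ F * n ^ (-γ) := mul_le_mul_of_nonneg_left
        (mul_exp_neg_two_mul_log_le_rpow_neg (by exact_mod_cast (by omega : 1 ≤ n)) hγ) hF0
end
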